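/- arXiv:2004.10086 — 4 statements merged into one kernel-verified Lean document; each statement's English description precedes it below -/
import Mathlib

section
/- For every integer n ≥ 2 and every complex number z not an n-th root of unity and z ≠ 0, (z^n + 1)/(z^n - 1) - (1/n)·(z + 1)/(z - 1) = (1/n)·((z² - 1)/(2z)) · Σ_{k=1}^{n-1} 1/((z² + 1)/(2z) - cos(2kπ/n)). -/
open Real Complex Finset

/-!
For an `n`-th root of unity `w`, `cos (2πk/n) = (w + w⁻¹)/2`, and a partial-fraction computation
gives `(z² - 1)/(2z) · 1/((z² + 1)/(2z) - (w + w⁻¹)/2) = z/(z - w) + z/(z - w⁻¹) - 1`.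
Since `zⁿ - 1 = ∏ (z - w)` over the `n`-th roots of unity, its logarithmic derivative gives
`∑ z/(z - w) = n zⁿ/(zⁿ - 1)`, and the same holds for the roots `w⁻¹`. Hence the sum over
`k = 0, …, n - 1` equals `n (zⁿ + 1)/(zⁿ - 1)`; the term `k = 0` is `(z + 1)/(z - 1)`.
-/

open Polynomial in
theorem IsPrimitiveRoot.sum_div_sub_pow {K : Type*} [Field K] {ζ : K} {n : ℕ}
    (hζ : IsPrimitiveRoot ζ n) {z : K} (hz : z ^ n ≠ 1) :
    ∑ k ∈ range n, z / (z - ζ ^ k) = n * z ^ n / (z ^ n - 1) := by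
  have hsplit : (X ^ n - C 1 : K[X]).Splits := by
    rw [splits_iff_card_roots, ← nthRoots, hζ.card_nthRoots_one, natDegree_X_pow_sub_C]
  have hlogDeriv := hsplit.eval_derivative_div_eval_of_ne_zero (x := z) (by simpa [sub_eq_zero])
  rw [← nthRoots, hζ.nthRoots_eq (one_pow n), Multiset.map_map, ← range_val,
    ← sum_eq_multiset_sum] at hlogDeriv
  obtain ⟨m, rfl⟩ : ∃ m, n = m + 1 :=
    Nat.exists_eq_add_one.2 (Nat.pos_of_ne_zero (by rintro rfl; simp at hz))
  simp only [eval_sub, eval_pow, eval_X, eval_C, derivative_sub, derivative_X_pow, derivative_C,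
    sub_zero, eval_mul, Function.comp_apply, mul_one, one_div] at hlogDeriv
  simp only [div_eq_mul_inv z, ← mul_sum, ← hlogDeriv]
  push_cast
  ring

theorem joukowski_partial_fraction {K : Type*} [Field K] [NeZero (2 : K)] {z w : K}
    (hz : z ≠ 0) (hw : w ≠ 0) (hzw : z ≠ w) (hzw' : z ≠ w⁻¹) :
    (z ^ 2 - 1) / (2 * z) * (1 / ((z ^ 2 + 1) / (2 * z) - (w + w⁻¹) / 2)) =
      z / (z - w) + z / (z - w⁻¹) - 1 := by
  have h₁ : z - w ≠ 0 := sub_ne_zero.2 hzw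
  have h₂ : z * w - 1 ≠ 0 := by
    rw [sub_ne_zero]; contrapose! hzw'; exact eq_inv_of_mul_eq_one_left hzw'
  have hden : (z ^ 2 + 1) / (2 * z) - (w + w⁻¹) / 2 = (z - w) * (z * w - 1) / (2 * z * w) := by
    field_simp; ring
  rw [hden]
  field_simp
  ring

theorem Complex.ofReal_cos_eq_exp_add_inv (x : ℝ) :
    (Real.cos x : ℂ) = (exp (x * I) + (exp (x * I))⁻¹) / 2 := by
  rw [ofReal_cos, ← exp_neg, cos, neg_mul]

theorem sum_range_joukowski_div_sub_cos {n : ℕ} (hn : n ≠ 0) {z : ℂ} (hz : z ^ n ≠ 1)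
    (hz0 : z ≠ 0) :
    ∑ k ∈ range n, (z ^ 2 - 1) / (2 * z) *
      (1 / ((z ^ 2 + 1) / (2 * z) - (Real.cos (2 * k * π / n) : ℂ))) =
        n * ((z ^ n + 1) / (z ^ n - 1)) := by
  set ζ := exp (2 * π * I / n)
  have hζ : IsPrimitiveRoot ζ n := isPrimitiveRoot_exp n hn
  have hne : ∀ {η : ℂ}, IsPrimitiveRoot η n → ∀ k : ℕ, z ≠ η ^ k := fun hη k h =>
    hz (by rw [h, ← pow_mul, mul_comm, pow_mul, hη.pow_eq_one, one_pow])
  have hterm (k : ℕ) : (z ^ 2 - 1) / (2 * z) *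
      (1 / ((z ^ 2 + 1) / (2 * z) - (Real.cos (2 * k * π / n) : ℂ))) =
        z / (z - ζ ^ k) + z / (z - ζ⁻¹ ^ k) - 1 := by
    have hpow : ζ ^ k = exp ((2 * k * π / n : ℝ) * I) := by
      rw [← Complex.exp_nat_mul]; push_cast; ring_nf
    rw [ofReal_cos_eq_exp_add_inv, ← hpow, inv_pow]
    exact joukowski_partial_fraction hz0 (pow_ne_zero _ (hζ.ne_zero hn)) (hne hζ k)
      (inv_pow ζ k ▸ hne hζ.inv k)
  rw [sum_congr rfl fun k _ => hterm k, sum_sub_distrib, sum_add_distrib,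
    hζ.sum_div_sub_pow hz, hζ.inv.sum_div_sub_pow hz, sum_const, card_range]
  have : z ^ n - 1 ≠ 0 := sub_ne_zero.2 hz
  field_simp
  ring

theorem stmt2 (n : ℕ) (hn : 2 ≤ n) (z : ℂ) (hz : z ^ n ≠ 1) (hz0 : z ≠ 0) :
    (z ^ n + 1) / (z ^ n - 1) - (1 / n) * ((z + 1) / (z - 1)) =
      (1 / n) * ((z ^ 2 - 1) / (2 * z)) * ∑ k ∈ Finset.Ico 1 n,
        1 / ((z ^ 2 + 1) / (2 * z) - (Real.cos (2 * k * Real.pi / n) : ℂ)) := by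
  have hn0 : n ≠ 0 := by omega
  have hz1 : z - 1 ≠ 0 := sub_ne_zero.2 (by rintro rfl; simp at hz)
  have hterm₀ : (z ^ 2 - 1) / (2 * z) *
      (1 / ((z ^ 2 + 1) / (2 * z) - (Real.cos (2 * (0 : ℕ) * π / n) : ℂ))) =
        (z + 1) / (z - 1) := by
    rw [Nat.cast_zero, mul_zero, zero_mul, zero_div, Real.cos_zero, ofReal_one,
      show (z ^ 2 + 1) / (2 * z) - 1 = (z - 1) ^ 2 / (2 * z) by field_simp; ring]
    field_simp
    ring
  have hfull := sum_range_joukowski_div_sub_cos hn0 hz hz0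
  rw [range_eq_Ico, sum_eq_sum_Ico_succ_bot (Nat.pos_of_ne_zero hn0), zero_add, hterm₀] at hfull
  rw [mul_assoc, mul_sum, eq_sub_of_add_eq' hfull]
  have : (n : ℂ) ≠ 0 := Nat.cast_ne_zero.2 hn0
  field_simp
end

section
/- For every real x > 0, ∫_0^∞ (1/(e^t-1) - 1/t + 1/2)·e^{-tx}·dt/t = log Γ(x) - (x - 1/2)·log x + x - (1/2)·log(2π). -/
/-!
Write `φ t = 1 / (e^t - 1) - 1 / t + 1 / 2`. Both sides, as functions of `x > 0`, satisfy
`F x - F (x + 1) = (x + 1/2) log ((x + 1) / x) - 1` and tend to `0` along `x + n` as `n → ∞`,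
so their difference is `1`-periodic with limit `0`, hence zero.
For the integral, the difference equation follows by Fubini from
`φ t (e^{-tx} - e^{-t(x+1)}) / t = ∫_x^{x+1} (x + 1/2 - u) e^{-ut} du`, and the decay from
`|φ t| ≤ t / 2`. For the right-hand side it is `Γ (x + 1) = x Γ x`, and the decay combines
Stirling's formula for `n!` with Euler's limit formula for `Γ`.
-/

open Real MeasureTheory Set Filter Topology

noncomputable def binetKernel (t : ℝ) : ℝ := 1 / (exp t - 1) - 1 / t + 1 / 2

noncomputable def binetIntegral (x : ℝ) : ℝ :=
  ∫ t in Ioi (0 : ℝ), binetKernel t * exp (-(t * x)) / t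

noncomputable def stirlingRemainder (x : ℝ) : ℝ :=
  log (Gamma x) - (x - 1 / 2) * log x + x - 1 / 2 * log (2 * π)

lemma eq_of_add_one_eq_of_tendsto_add_nat {α : Type*} [TopologicalSpace α] [T2Space α]
    {f : ℝ → α} {a : α} {x : ℝ} (hx : 0 < x) (hf : ∀ y, 0 < y → f (y + 1) = f y)
    (hlim : Tendsto (fun n : ℕ => f (x + n)) atTop (𝓝 a)) : f x = a := by
  have hconst (n : ℕ) : f (x + n) = f x := by
    induction n with
    | zero => simp
    | succ n ih => rw [Nat.cast_succ, ← add_assoc, hf _ (by positivity), ih]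
  exact tendsto_nhds_unique tendsto_const_nhds (by simpa only [hconst] using hlim)

lemma abs_binetKernel_le_half {t : ℝ} (ht : 1 ≤ t) : |binetKernel t| ≤ 1 / 2 := by
  have hexp : t ≤ exp t - 1 := by linarith [add_one_le_exp t]
  have h1 : 0 < 1 / (exp t - 1) := one_div_pos.2 (by linarith)
  have h2 : 1 / (exp t - 1) ≤ 1 / t := one_div_le_one_div_of_le (by linarith) hexp
  have h3 : 1 / t ≤ 1 := by rw [div_le_one (by linarith)]; exact ht
  rw [binetKernel, abs_le]
  constructor <;> linarith

lemma binetKernel_eq {t : ℝ} (ht : 0 < t) :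
    binetKernel t = ((t - 2) * exp t + t + 2) / (2 * t * (exp t - 1)) := by
  have : exp t - 1 ≠ 0 := by linarith [add_one_le_exp t]
  rw [binetKernel]
  field_simp
  ring

lemma abs_binetKernel_le_of_le_one {t : ℝ} (ht0 : 0 < t) (ht1 : t ≤ 1) :
    |binetKernel t| ≤ t / 2 := by
  have htaylor : |exp t - (1 + t + t ^ 2 / 2)| ≤ t ^ 3 * (2 / 9) := by
    have := Real.exp_bound (x := t) (by rwa [abs_of_pos ht0]) (n := 3) (by norm_num)
    norm_num [Finset.sum_range_succ, abs_of_pos ht0, Nat.factorial] at this ⊢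
    exact this
  have hnum : |(t - 2) * exp t + t + 2| ≤ t ^ 3 := calc
    |(t - 2) * exp t + t + 2| = |t ^ 3 / 2 + (t - 2) * (exp t - (1 + t + t ^ 2 / 2))| := by
      ring_nf
    _ ≤ t ^ 3 / 2 + 2 * (t ^ 3 * (2 / 9)) := by
      grw [abs_add_le, abs_mul, abs_of_pos (by positivity : 0 < t ^ 3 / 2), htaylor,
        abs_of_neg (by linarith : t - 2 < 0)]
      gcongr
      linarith
    _ ≤ t ^ 3 := by nlinarith [pow_pos ht0 3]
  have hden : 2 * t ^ 2 ≤ 2 * t * (exp t - 1) := by nlinarith [add_one_le_exp t]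
  have hden_pos : 0 < 2 * t * (exp t - 1) := lt_of_lt_of_le (by positivity) hden
  rw [binetKernel_eq ht0, abs_div, abs_of_pos hden_pos, div_le_iff₀ hden_pos]
  calc _ ≤ t ^ 3 := hnum
    _ = t / 2 * (2 * t ^ 2) := by ring
    _ ≤ t / 2 * (2 * t * (exp t - 1)) := by gcongr

lemma abs_binetKernel_le {t : ℝ} (ht : 0 < t) : |binetKernel t| ≤ t / 2 := by
  rcases le_total t 1 with h | h
  · exact abs_binetKernel_le_of_le_one ht h
  · linarith [abs_binetKernel_le_half h]

lemma abs_binetKernel_mul_exp_div_le {x t : ℝ} (ht : 0 < t) :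
    |binetKernel t * exp (-(t * x)) / t| ≤ exp (-x * t) / 2 := by
  have hk : |binetKernel t| / t ≤ 1 / 2 := by
    rw [div_le_iff₀ ht]; linarith [abs_binetKernel_le ht]
  rw [mul_div_right_comm, abs_mul, abs_div, abs_of_pos ht, abs_of_pos (exp_pos _),
    neg_mul, mul_comm x]
  linarith [mul_le_mul_of_nonneg_right hk (exp_pos (-(t * x))).le]

lemma integrableOn_binetKernel_mul_exp_div {x : ℝ} (hx : 0 < x) :
    IntegrableOn (fun t => binetKernel t * exp (-(t * x)) / t) (Ioi 0) := by
  refine ((exp_neg_integrableOn_Ioi 0 hx).div_const 2).mono' ?_ ?_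
  · unfold binetKernel
    exact Measurable.aestronglyMeasurable (by fun_prop)
  · filter_upwards [ae_restrict_mem measurableSet_Ioi] with t ht
    exact abs_binetKernel_mul_exp_div_le ht

lemma integral_exp_neg_mul_Ioi {u : ℝ} (hu : 0 < u) :
    ∫ t in Ioi (0 : ℝ), exp (-u * t) = 1 / u := by
  rw [integral_exp_mul_Ioi (by linarith), mul_zero, exp_zero, neg_div_neg_eq]

lemma abs_binetIntegral_le {x : ℝ} (hx : 0 < x) : |binetIntegral x| ≤ 1 / (2 * x) := by
  have hexp : ∫ t in Ioi (0 : ℝ), exp (-x * t) / 2 = 1 / (2 * x) := by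
    rw [integral_div, integral_exp_neg_mul_Ioi hx, div_div, mul_comm]
  rw [binetIntegral, ← hexp, ← norm_eq_abs]
  refine norm_integral_le_of_norm_le ((exp_neg_integrableOn_Ioi 0 hx).div_const 2) ?_
  filter_upwards [ae_restrict_mem measurableSet_Ioi] with t ht
  exact abs_binetKernel_mul_exp_div_le ht

lemma tendsto_binetIntegral_add_nat {x : ℝ} (hx : 0 < x) :
    Tendsto (fun n : ℕ => binetIntegral (x + n)) atTop (𝓝 0) := by
  have hden : Tendsto (fun n : ℕ => 2 * (x + n)) atTop atTop :=
    (tendsto_atTop_add_const_left _ x tendsto_natCast_atTop_atTop).const_mul_atTop two_pos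
  refine squeeze_zero_norm (fun n => abs_binetIntegral_le (by positivity)) ?_
  simp only [one_div]
  exact tendsto_inv_atTop_zero.comp hden

lemma integral_sub_mul_exp_neg_mul {x t : ℝ} (ht : 0 < t) :
    ∫ u in x..x + 1, (x + 1 / 2 - u) * exp (-u * t) =
      binetKernel t * exp (-(t * x)) / t - binetKernel t * exp (-(t * (x + 1))) / t := by
  have hderiv (u : ℝ) : HasDerivAt (fun u => ((u - (x + 1 / 2)) / t + 1 / t ^ 2) * exp (-u * t))
      ((x + 1 / 2 - u) * exp (-u * t)) u := by
    refine ((((hasDerivAt_id' u).sub_const (x + 1 / 2)).div_const t).add_const (1 / t ^ 2)).mul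
      ((hasDerivAt_neg' u).mul_const t).exp |>.congr_deriv ?_
    field_simp
    ring
  rw [intervalIntegral.integral_eq_sub_of_hasDerivAt (fun u _ => hderiv u)
    (by apply Continuous.intervalIntegrable; fun_prop)]
  have h1 : exp (-(x + 1) * t) = exp (-x * t) * (exp t)⁻¹ := by
    rw [← exp_neg, ← exp_add]; ring_nf
  have h2 : exp (-(t * (x + 1))) = exp (-x * t) * (exp t)⁻¹ := by
    rw [← exp_neg, ← exp_add]; ring_nf
  have h3 : exp (-(t * x)) = exp (-x * t) := by ring_nf
  have he : exp t - 1 ≠ 0 := by linarith [add_one_le_exp t]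
  rw [h1, h2, h3, binetKernel]
  field_simp
  ring

lemma integrable_sub_mul_exp_neg_mul {x : ℝ} (hx : 0 < x) :
    Integrable (Function.uncurry fun u t => (x + 1 / 2 - u) * exp (-u * t))
      ((volume.restrict (uIoc x (x + 1))).prod (volume.restrict (Ioi 0))) := by
  rw [uIoc_of_le (by linarith)]
  have hbound : Integrable (fun p : ℝ × ℝ => (1 / 2 : ℝ) * exp (-x * p.2))
      ((volume.restrict (Ioc x (x + 1))).prod (volume.restrict (Ioi 0))) :=
    (integrable_const _).mul_prod (exp_neg_integrableOn_Ioi 0 hx)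
  refine hbound.mono' (Continuous.aestronglyMeasurable (by fun_prop)) ?_
  rw [Measure.prod_restrict]
  filter_upwards [ae_restrict_mem (measurableSet_Ioc.prod measurableSet_Ioi)]
    with ⟨u, t⟩ ⟨⟨hxu, hux⟩, (ht : 0 < t)⟩
  simp only [Function.uncurry, norm_mul, norm_eq_abs, abs_of_pos (exp_pos _)]
  gcongr
  rw [abs_le]; constructor <;> linarith

lemma binetIntegral_sub_binetIntegral_add_one {x : ℝ} (hx : 0 < x) :
    binetIntegral x - binetIntegral (x + 1) = (x + 1 / 2) * log ((x + 1) / x) - 1 := by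
  have hinner : EqOn (fun u => ∫ t in Ioi (0 : ℝ), (x + 1 / 2 - u) * exp (-u * t))
      (fun u => (x + 1 / 2) * u⁻¹ - 1) (uIcc x (x + 1)) := by
    intro u hu
    rw [uIcc_of_le (by linarith)] at hu
    have hu0 : 0 < u := hx.trans_le hu.1
    simp only [integral_const_mul, integral_exp_neg_mul_Ioi hu0]
    field_simp
  rw [binetIntegral, binetIntegral, ← integral_sub (integrableOn_binetKernel_mul_exp_div hx)
      (integrableOn_binetKernel_mul_exp_div (by linarith)),
    ← setIntegral_congr_fun measurableSet_Ioi (fun t ht => integral_sub_mul_exp_neg_mul ht),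
    ← intervalIntegral_integral_swap (integrable_sub_mul_exp_neg_mul hx),
    intervalIntegral.integral_congr hinner, intervalIntegral.integral_sub
      ((intervalIntegrable_inv_iff.2 (Or.inr (notMem_uIcc_of_lt hx (by linarith)))).const_mul _)
      intervalIntegrable_const, intervalIntegral.integral_const_mul,
    integral_inv_of_pos hx (by linarith)]
  simp

lemma log_Gamma_add_one {x : ℝ} (hx : 0 < x) :
    log (Gamma (x + 1)) = log (Gamma x) + log x := by
  rw [Gamma_add_one hx.ne', log_mul hx.ne' (Gamma_pos_of_pos hx).ne', add_comm]

lemma stirlingRemainder_sub_stirlingRemainder_add_one {x : ℝ} (hx : 0 < x) :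
    stirlingRemainder x - stirlingRemainder (x + 1) = (x + 1 / 2) * log ((x + 1) / x) - 1 := by
  rw [stirlingRemainder, stirlingRemainder, log_Gamma_add_one hx, log_div (by linarith) hx.ne']
  ring

lemma log_Gamma_add_nat {x : ℝ} (hx : 0 < x) (n : ℕ) :
    log (Gamma (x + n)) =
      log (Gamma x) + x * log n + log n.factorial - log (x + n) - BohrMollerup.logGammaSeq x n := by
  have := BohrMollerup.f_add_nat_eq (f := log ∘ Gamma) (fun hy => log_Gamma_add_one hy) hx n
  simp only [Function.comp_apply] at this
  rw [this, BohrMollerup.logGammaSeq, Finset.sum_range_succ]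
  ring

lemma tendsto_nat_add_mul_log_one_add_div (a c : ℝ) :
    Tendsto (fun n : ℕ => (n + c) * log (1 + a / n)) atTop (𝓝 a) := by
  have hlog : Tendsto (fun n : ℕ => log (1 + a / n)) atTop (𝓝 0) := by
    simpa using ((tendsto_const_div_atTop_nhds_zero_nat a).const_add 1).log (by norm_num)
  simpa [add_mul] using
    ((tendsto_mul_log_one_add_div_atTop a).comp tendsto_natCast_atTop_atTop).add
      (hlog.const_mul c)

lemma stirlingRemainder_add_nat {x : ℝ} (hx : 0 < x) {n : ℕ} (hn : n ≠ 0) :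
    stirlingRemainder (x + n) = (log (Gamma x) - BohrMollerup.logGammaSeq x n) +
      (log (Stirling.stirlingSeq n) - log √π) + (x - (n + (x + 1 / 2)) * log (1 + x / n)) := by
  have hn0 : (0 : ℝ) < n := by positivity
  have hxn : 0 < x + n := by positivity
  have hfac := Stirling.log_stirlingSeq_formula n
  have hsplit : 1 + x / n = (x + n) / n := by field_simp; ring
  rw [log_div hn0.ne' (exp_ne_zero 1), log_exp, log_mul two_ne_zero hn0.ne'] at hfac
  rw [stirlingRemainder, log_Gamma_add_nat hx, hsplit, log_div hxn.ne' hn0.ne',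
    log_mul two_ne_zero pi_pos.ne', log_sqrt pi_pos.le]
  linear_combination -hfac

lemma tendsto_stirlingRemainder_add_nat {x : ℝ} (hx : 0 < x) :
    Tendsto (fun n : ℕ => stirlingRemainder (x + n)) atTop (𝓝 0) := by
  have hGamma : Tendsto (fun n => log (Gamma x) - BohrMollerup.logGammaSeq x n) atTop (𝓝 0) := by
    simpa using (BohrMollerup.tendsto_log_gamma hx).const_sub (log (Gamma x))
  have hStirling : Tendsto (fun n => log (Stirling.stirlingSeq n) - log √π) atTop (𝓝 0) := by
    simpa using (Stirling.tendsto_stirlingSeq_sqrt_pi.log (by positivity)).sub_const (log √π)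
  have hpow : Tendsto (fun n : ℕ => x - (n + (x + 1 / 2)) * log (1 + x / n)) atTop (𝓝 0) := by
    simpa using (tendsto_nat_add_mul_log_one_add_div x (x + 1 / 2)).const_sub x
  have hsum := (hGamma.add hStirling).add hpow
  rw [add_zero, add_zero] at hsum
  refine hsum.congr' ?_
  filter_upwards [eventually_ne_atTop 0] with n hn
  exact (stirlingRemainder_add_nat hx hn).symm

theorem stmt8 (x : ℝ) (hx : 0 < x) :
    ∫ t in Set.Ioi (0 : ℝ),
        (1 / (Real.exp t - 1) - 1 / t + 1 / 2) * Real.exp (-(t * x)) / t =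
      Real.log (Real.Gamma x) - (x - 1 / 2) * Real.log x + x
        - (1 / 2) * Real.log (2 * Real.pi) := by
  suffices (binetIntegral - stirlingRemainder) x = 0 from sub_eq_zero.1 this
  refine eq_of_add_one_eq_of_tendsto_add_nat hx (fun y hy => ?_) ?_
  · have hB := binetIntegral_sub_binetIntegral_add_one hy
    have hR := stirlingRemainder_sub_stirlingRemainder_add_one hy
    simp only [Pi.sub_apply]
    linarith
  · simpa using (tendsto_binetIntegral_add_nat hx).sub (tendsto_stirlingRemainder_add_nat hx)
end

section
/- As x → 0⁺, the integral ∫_1^∞ e^{-tx}·dt/t equals -log x - γ + o(1), where γ is the Euler–Mascheroni constant. Equivalently, lim_{x→0⁺} (∫_x^∞ e^{-t} dt/t + log x) = -γ. -/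
/-!
Integrating by parts, `∫_x^∞ e^{-t}/t dt = -e^{-x} log x + ∫_x^∞ e^{-t} log t dt`, so the quantity
in question is `(1 - e^{-x}) log x + ∫_x^∞ e^{-t} log t dt`. The first term is `O(x log x)`, and the
second tends to `∫_0^∞ e^{-t} log t dt = Γ'(1) = -γ`.
-/

open Real MeasureTheory Filter Set Topology

theorem tendsto_setIntegral_Ioi_nhdsGT {E : Type*} [NormedAddCommGroup E] [NormedSpace ℝ E]
    {μ : Measure ℝ} [NullSingletonClass μ] {f : ℝ → E} {a : ℝ} (hf : IntegrableOn f (Ioi a) μ) :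
    Tendsto (fun x => ∫ t in Ioi x, f t ∂μ) (𝓝[>] a) (𝓝 (∫ t in Ioi a, f t ∂μ)) := by
  have hprim : Tendsto (fun x => ∫ t in a..x, f t ∂μ) (𝓝[>] a) (𝓝 0) := by
    have hint : IntervalIntegrable f μ (min a a) (max a (a + 1)) := by
      rw [min_self, max_eq_right (by linarith), intervalIntegrable_iff_integrableOn_Ioc_of_le
        (by linarith)]
      exact hf.mono_set Ioc_subset_Ioi_self
    have hcont := (intervalIntegral.continuousWithinAt_primitive (measure_singleton a) hint).tendsto
    rw [intervalIntegral.integral_same] at hcont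
    refine hcont.mono_left ?_
    rw [← nhdsWithin_Ioc_eq_nhdsGT (lt_add_one a)]
    exact nhdsWithin_mono _ Ioc_subset_Icc_self
  have hlim := hprim.const_sub (∫ t in Ioi a, f t ∂μ)
  rw [sub_zero] at hlim
  refine hlim.congr' ?_
  filter_upwards [self_mem_nhdsWithin] with x hx
  rw [← intervalIntegral.integral_Ioi_sub_Ioi hf (le_of_lt hx), sub_sub_cancel]

theorem integrableOn_exp_neg_mul_log : IntegrableOn (fun t => exp (-t) * log t) (Ioi 0) := by
  rw [← Ioc_union_Ioi_eq_Ioi zero_le_one]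
  refine IntegrableOn.union ?_ ?_
  · refine (intervalIntegral.intervalIntegrable_log' (a := 0) (b := 1)).1.bdd_mul (c := 1)
      (by fun_prop) ?_
    filter_upwards [ae_restrict_mem measurableSet_Ioc] with t ht
    rw [norm_of_nonneg (exp_pos _).le, exp_le_one_iff, neg_nonpos]
    exact ht.1.le
  · have hGamma := (GammaIntegral_convergent two_pos).mono_set (Ioi_subset_Ioi zero_le_one)
    norm_num at hGamma
    refine hGamma.mono' (by fun_prop) ?_
    filter_upwards [ae_restrict_mem measurableSet_Ioi] with t ht
    rw [norm_mul, norm_of_nonneg (exp_pos _).le, norm_of_nonneg (log_nonneg (le_of_lt ht))]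
    gcongr
    exact (log_le_sub_one_of_pos (zero_lt_one.trans ht)).trans (by linarith)

theorem integral_exp_neg_mul_log : ∫ t in Ioi 0, exp (-t) * log t = -eulerMascheroniConstant := by
  have hGamma : HasDerivAt Complex.Gamma (∫ t in Ioi (0 : ℝ), exp (-t) * log t : ℝ) 1 := by
    have hEq : Complex.Gamma =ᶠ[𝓝 1] Complex.GammaIntegral := by
      filter_upwards [Complex.continuous_re.isOpen_preimage _ isOpen_Ioi |>.mem_nhds
        (by simp : (1 : ℂ) ∈ Complex.re ⁻¹' Ioi 0)] with s hs
      exact Complex.Gamma_eq_integral hs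
    refine ((Complex.hasDerivAt_GammaIntegral one_pos).congr_of_eventuallyEq hEq).congr_deriv ?_
    rw [← integral_complex_ofReal]
    refine integral_congr_ae (ae_of_all _ fun t => ?_)
    simp only [sub_self, Complex.cpow_zero, one_mul]
    push_cast
    ring
  exact_mod_cast hGamma.unique Complex.hasDerivAt_Gamma_one

theorem tendsto_exp_neg_mul_log_atTop : Tendsto (fun t : ℝ => exp (-t) * log t) atTop (𝓝 0) := by
  have hid : (fun t : ℝ => t) =o[atTop] exp := by simpa using isLittleO_pow_exp_atTop (n := 1)
  simpa only [exp_neg, div_eq_inv_mul] using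
    (isLittleO_log_id_atTop.trans hid).tendsto_div_nhds_zero

theorem integral_Ioi_exp_neg_div {x : ℝ} (hx : 0 < x) :
    ∫ t in Ioi x, exp (-t) / t = (∫ t in Ioi x, exp (-t) * log t) - exp (-x) * log x := by
  have hcont : ContinuousAt (fun t => exp (-t) * log t) x := by
    fun_prop (disch := exact hx.ne')
  have hparts := integral_Ioi_mul_deriv_eq_deriv_mul (a := x) (u := fun t => exp (-t))
    (v := log) (u' := fun t => -exp (-t)) (v' := fun t => t⁻¹) (a' := exp (-x) * log x)
    (fun t _ => by simpa using (hasDerivAt_neg t).exp)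
    (fun t ht => hasDerivAt_log (hx.trans ht).ne') ?_ ?_
    hcont.continuousWithinAt.tendsto tendsto_exp_neg_mul_log_atTop
  · simp only [neg_mul, integral_neg, div_eq_mul_inv] at hparts ⊢
    rw [hparts]
    ring
  · refine (integrableOn_exp_neg_Ioi x).mul_bdd (c := x⁻¹) (by fun_prop) ?_
    filter_upwards [ae_restrict_mem measurableSet_Ioi] with t (ht : x < t)
    rw [norm_inv, norm_of_nonneg (hx.trans ht).le]
    exact inv_anti₀ hx ht.le
  · simpa [Pi.mul_def] using (integrableOn_exp_neg_mul_log.mono_set (Ioi_subset_Ioi hx.le)).neg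

theorem tendsto_one_sub_exp_neg_mul_log_nhdsGT :
    Tendsto (fun x : ℝ => (1 - exp (-x)) * log x) (𝓝[>] 0) (𝓝 0) := by
  have hxlog : Tendsto (fun x : ℝ => x * log x) (𝓝[>] 0) (𝓝 0) := by
    simpa using continuous_mul_log.continuousWithinAt.tendsto (x := 0) (s := Ioi 0)
  refine squeeze_zero_norm' ?_ (by simpa using hxlog.norm)
  filter_upwards [self_mem_nhdsWithin] with x (hx : 0 < x)
  have hexp : 0 ≤ 1 - exp (-x) := sub_nonneg.2 (exp_le_one_iff.2 (neg_nonpos.2 hx.le))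
  rw [norm_mul, norm_eq_abs, norm_eq_abs, abs_of_nonneg hexp, abs_of_pos hx]
  gcongr
  linarith [one_sub_le_exp_neg x]

theorem stmt9 :
    Filter.Tendsto
      (fun x : ℝ => (∫ t in Set.Ioi x, Real.exp (-t) / t) + Real.log x)
      (nhdsWithin 0 (Set.Ioi 0)) (nhds (-Real.eulerMascheroniConstant)) := by
  have hlim := (tendsto_setIntegral_Ioi_nhdsGT integrableOn_exp_neg_mul_log).add
    tendsto_one_sub_exp_neg_mul_log_nhdsGT
  rw [integral_exp_neg_mul_log, add_zero] at hlim
  refine hlim.congr' ?_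
  filter_upwards [self_mem_nhdsWithin] with x hx
  rw [integral_Ioi_exp_neg_div hx]
  ring
end

section
/- For positive integers a, p, q, the limit as λ → p/q of cot(aλqπ)·aλqπ + cot(a(1/λ)pπ)·a(1/λ)pπ equals 1. -/
/-!
As `λ → p/q`, the arguments `aλqπ` and `apπ/λ` approach the multiples `apπ` and `aqπ` of `π`,
near which `cot` is `1/(x - nπ) + O(x - nπ)`. The `O` parts contribute nothing in the limit,
while the polar parts give exactly `λq/(λq - p) - p/(λq - p) = 1`.
-/

open Real Filter Topology

namespace Real

theorem cot_periodic : Function.Periodic cot π := fun x => by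
  simp only [← tan_inv_eq_cot, tan_periodic x]

/-- Also valid at `x = 0`, where `cot 0 = 0⁻¹ = 0`. -/
theorem abs_cot_sub_inv_le {x : ℝ} (hx : |x| ≤ π / 2) : |cot x - x⁻¹| ≤ π / 3 * |x| := by
  rcases eq_or_ne x 0 with rfl | hx0
  · simp [cot_eq_cos_div_sin]
  have hsin : 2 / π * |x| ≤ |sin x| := mul_abs_le_abs_sin hx
  have hsin0 : 0 < |sin x| := lt_of_lt_of_le (by positivity) hsin
  have hcos : |x * cos x - sin x| ≤ 2 / 3 * |x| ^ 3 := by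
    have h1 : |1 - cos x| ≤ x ^ 2 / 2 := by
      rw [abs_of_nonneg (by linarith [cos_le_one x])]
      linarith [one_sub_sq_div_two_le_cos (x := x)]
    calc |x * cos x - sin x| = |(x - sin x) - x * (1 - cos x)| := by ring_nf
      _ ≤ |x - sin x| + |x| * |1 - cos x| := by rw [← abs_mul]; exact abs_sub _ _
      _ ≤ |x| ^ 3 / 6 + |x| * (x ^ 2 / 2) := by gcongr; exact abs_sub_sin_le x
      _ = 2 / 3 * |x| ^ 3 := by rw [← sq_abs x]; ring
  have heq : cot x - x⁻¹ = (x * cos x - sin x) / (x * sin x) := by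
    have : sin x ≠ 0 := abs_pos.1 hsin0
    rw [cot_eq_cos_div_sin]
    field_simp
  rw [heq, abs_div, abs_mul, div_le_iff₀ (mul_pos (abs_pos.2 hx0) hsin0)]
  calc |x * cos x - sin x| ≤ 2 / 3 * |x| ^ 3 := hcos
    _ = π / 3 * |x| * (|x| * (2 / π * |x|)) := by field_simp
    _ ≤ π / 3 * |x| * (|x| * |sin x|) := by gcongr

theorem tendsto_cot_sub_inv_nhds_zero : Tendsto (fun x => cot x - x⁻¹) (𝓝 0) (𝓝 0) := by
  have hsmall : ∀ᶠ x : ℝ in 𝓝 0, |x| ≤ π / 2 :=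
    eventually_abs_sub_lt 0 (half_pos pi_pos) |>.mono fun x hx => by simpa using hx.le
  refine squeeze_zero_norm' (hsmall.mono fun x hx => abs_cot_sub_inv_le hx) ?_
  simpa using (continuous_abs.tendsto (0 : ℝ)).const_mul (π / 3)

end Real

theorem ContinuousAt.tendsto_mul_cot_sub_inv {f u : ℝ → ℝ} {x₀ : ℝ} (hf : ContinuousAt f x₀)
    (hu : ContinuousAt u x₀) (hu₀ : u x₀ = 0) :
    Tendsto (fun x => f x * (cot (u x) - (u x)⁻¹)) (𝓝 x₀) (𝓝 0) := by
  have hu' : Tendsto u (𝓝 x₀) (𝓝 0) := hu₀ ▸ hu.tendsto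
  simpa using hf.tendsto.mul (tendsto_cot_sub_inv_nhds_zero.comp hu')

theorem cot_mul_add_cot_mul_eq_one_add (a p q : ℕ) (ha : a ≠ 0) {l : ℝ} (hl : l ≠ 0)
    (hlq : l * q ≠ p) :
    cot (a * l * q * π) * (a * l * q * π) + cot (a * (1 / l) * p * π) * (a * (1 / l) * p * π) =
      1 + a * l * q * π * (cot (a * π * (l * q - p)) - (a * π * (l * q - p))⁻¹)
        + a * (1 / l) * p * π * (cot (a * π * (p / l - q)) - (a * π * (p / l - q))⁻¹) := by
  have hx : cot (a * l * q * π) = cot (a * π * (l * q - p)) := by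
    rw [← cot_periodic.nat_mul (a * p) (a * π * (l * q - p))]
    push_cast
    ring_nf
  have hy : cot (a * (1 / l) * p * π) = cot (a * π * (p / l - q)) := by
    rw [← cot_periodic.nat_mul (a * q) (a * π * (p / l - q))]
    push_cast
    ring_nf
  have ha' : (a : ℝ) ≠ 0 := Nat.cast_ne_zero.2 ha
  have hu : l * q - p ≠ 0 := sub_ne_zero.2 hlq
  have hv : p / l - q ≠ 0 := by
    rw [sub_ne_zero, Ne, div_eq_iff hl]
    exact fun h => hlq (by linarith)
  rw [hx, hy]
  field_simp
  ring

theorem stmt16 (a p q : ℕ) (ha : 1 ≤ a) (hp : 1 ≤ p) (hq : 1 ≤ q) :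
    Filter.Tendsto
      (fun l : ℝ =>
        Real.cot (a * l * q * Real.pi) * (a * l * q * Real.pi) +
          Real.cot (a * (1 / l) * p * Real.pi) * (a * (1 / l) * p * Real.pi))
      (nhdsWithin ((p : ℝ) / q) {(p : ℝ) / q}ᶜ) (nhds 1) := by
  have hp' : (p : ℝ) ≠ 0 := Nat.cast_ne_zero.2 (by omega)
  have hq' : (q : ℝ) ≠ 0 := Nat.cast_ne_zero.2 (by omega)
  have hpq : (p : ℝ) / q ≠ 0 := div_ne_zero hp' hq'
  have hX := ContinuousAt.tendsto_mul_cot_sub_inv (f := fun l => a * l * q * π)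
    (u := fun l => a * π * (l * q - p)) (x₀ := p / q) (by fun_prop) (by fun_prop)
    (by simp [div_mul_cancel₀ _ hq'])
  have hY := ContinuousAt.tendsto_mul_cot_sub_inv (f := fun l => a * (1 / l) * p * π)
    (u := fun l => a * π * (p / l - q)) (x₀ := p / q) (by fun_prop (disch := exact hpq))
    (by fun_prop (disch := exact hpq)) (by simp [div_div_cancel₀ hp'])
  have hlim := ((tendsto_const_nhds (x := (1 : ℝ))).add hX).add hY
  rw [add_zero, add_zero] at hlim
  refine (hlim.mono_left nhdsWithin_le_nhds).congr' ?_
  filter_upwards [self_mem_nhdsWithin, eventually_nhdsWithin_of_eventually_nhds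
    (eventually_ne_nhds hpq)] with l hlpq hl
  exact (cot_mul_add_cot_mul_eq_one_add a p q (by omega) hl
    fun h => hlpq (eq_div_of_mul_eq hq' h)).symm
end
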